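/- arXiv:2005.00194 — 3 statements merged into one kernel-verified Lean document; each statement's English description precedes it below -/
import Mathlib

section
/- The map sending sgn([α]), for [α] ∈ (O_L^×/(O_L^×)²)_{N=□}, to the coset sgn(α)·sgn(O_K^×) is a well-defined group isomorphism sgn((O_L^×/(O_L^×)²)_{N=□}) ≅ sgn(O_L^×)/sgn(O_K^×); moreover sgn(O_K^×) ∩ Ṽ is trivial and there is an induced isomorphism sgn((O_L^×/(O_L^×)²)_{N=□})·Ṽ ≅ (sgn(O_L^×)·Ṽ)/sgn(O_K^×). -/
/- Common setup: `K` is a number field and `L/K` a cubic extension (arising as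
`K[x]/(F)` for a monic irreducible cubic `F` over `𝓞 K`).  For each real embedding
`σ` of `K`, `dst σ` is the distinguished real embedding of `L` above `σ`
(corresponding to the real root of `F`, resp. the smallest real root `γ₁`). -/

open NumberField Polynomial
open scoped nonZeroDivisors

noncomputable section

namespace Paper

/-- The sign of a nonzero real number, as an element of `ℤˣ`. -/
def sgnAux (x : ℝ) : ℤˣ := if 0 < x then 1 else -1

lemma sgnAux_mul {x y : ℝ} (hx : x ≠ 0) (hy : y ≠ 0) :
    sgnAux (x * y) = sgnAux x * sgnAux y := by
  rcases hx.lt_or_gt with h | h <;> rcases hy.lt_or_gt with h' | h' <;>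
    unfold sgnAux
  · rw [if_pos (mul_pos_of_neg_of_neg h h'), if_neg (not_lt.2 h.le), if_neg (not_lt.2 h'.le)]
    decide
  · rw [if_neg (not_lt.2 (mul_neg_of_neg_of_pos h h').le), if_neg (not_lt.2 h.le), if_pos h']
    decide
  · rw [if_neg (not_lt.2 (mul_neg_of_pos_of_neg h h').le), if_pos h, if_neg (not_lt.2 h'.le)]
    decide
  · rw [if_pos (mul_pos h h'), if_pos h, if_pos h']
    decide

variable (L : Type) [Field L] [NumberField L]

/-- The sign map `L^× → ∏_{real embeddings of L} {±1}`. -/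
def sgn : Lˣ →* ((L →+* ℝ) → ℤˣ) where
  toFun α := fun τ => sgnAux (τ (α : L))
  map_one' := by
    funext τ
    simp [sgnAux]
  map_mul' α β := by
    funext τ
    have hα : τ (α : L) ≠ 0 := (map_ne_zero τ).mpr α.ne_zero
    have hβ : τ (β : L) ≠ 0 := (map_ne_zero τ).mpr β.ne_zero
    have h : τ ((α * β : Lˣ) : L) = τ (α : L) * τ (β : L) := by
      rw [Units.val_mul, map_mul]
    show sgnAux (τ ((α * β : Lˣ) : L)) = sgnAux (τ (α : L)) * sgnAux (τ (β : L))
    rw [h, sgnAux_mul hα hβ]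

variable (K : Type) [Field K] [Algebra K L]

/-- The set of real embeddings of `L` extending a given real embedding of `K`. -/
def extSet (σ : K →+* ℝ) : Set (L →+* ℝ) := {τ | τ.comp (algebraMap K L) = σ}

variable (dst : (K →+* ℝ) → (L →+* ℝ))

/-- The group `Ṽ = ∏_{v ∈ A} {1} × ∏_{v ∈ B} {(1,1,1),(1,-1,-1)}`:  at each real
place of `K`, the component at the distinguished place `ṽ` is `1` and the product of
all components above `v` is `1`. -/
def Vt : Subgroup ((L →+* ℝ) → ℤˣ) where
  carrier := {g | ∀ σ : K →+* ℝ, g (dst σ) = 1 ∧ (∏ᶠ τ ∈ extSet L K σ, g τ) = 1}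
  one_mem' := by
    intro σ
    constructor
    · rfl
    · simp
  mul_mem' := by
    intro g h hg hh σ
    refine ⟨by rw [Pi.mul_apply, (hg σ).1, (hh σ).1, one_mul], ?_⟩
    have hfin : (extSet L K σ).Finite := Set.toFinite _
    calc (∏ᶠ τ ∈ extSet L K σ, (g * h) τ)
        = (∏ᶠ τ ∈ extSet L K σ, g τ) * ∏ᶠ τ ∈ extSet L K σ, h τ :=
          finprod_mem_mul_distrib hfin
      _ = 1 := by rw [(hg σ).2, (hh σ).2, one_mul]
  inv_mem' := by
    intro g hg
    have : g⁻¹ = g := by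
      funext τ
      exact Int.units_inv_eq_self (g τ)
    rw [this]
    exact hg

/-- The group `Ṽ' = ∏_{v ∈ A} {±1} × ∏_{v ∈ B} {(1,1,1),(1,-1,-1),(-1,1,1),(-1,-1,-1)}`:
at each real place `v` of `K`, the product of all the components above `v` equals the
component at the distinguished place `ṽ`. -/
def Vt' : Subgroup ((L →+* ℝ) → ℤˣ) where
  carrier := {g | ∀ σ : K →+* ℝ, (∏ᶠ τ ∈ extSet L K σ, g τ) = g (dst σ)}
  one_mem' := by
    intro σ
    simp
  mul_mem' := by
    intro g h hg hh σ
    have hfin : (extSet L K σ).Finite := Set.toFinite _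
    calc (∏ᶠ τ ∈ extSet L K σ, (g * h) τ)
        = (∏ᶠ τ ∈ extSet L K σ, g τ) * ∏ᶠ τ ∈ extSet L K σ, h τ :=
          finprod_mem_mul_distrib hfin
      _ = (g * h) (dst σ) := by rw [hg σ, hh σ]; rfl
  inv_mem' := by
    intro g hg
    have : g⁻¹ = g := by
      funext τ
      exact Int.units_inv_eq_self (g τ)
    rw [this]
    exact hg

/-- `P_L^∞ = sgn⁻¹(Ṽ)`; equivalently, the group of `α ∈ L^×` such that `ṽ(α) > 0` and
`v(N(α)) > 0` for all real places `v` of `K`. -/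
def Pinf : Subgroup Lˣ := (Vt L K dst).comap (sgn L)

/-- `P_L^0 = sgn⁻¹(Ṽ')`; equivalently, the group of `α ∈ L^×` such that
`ṽ₂(α)ṽ₃(α) > 0` for all unramified real places `v` of `K`. -/
def P0 : Subgroup Lˣ := (Vt' L K dst).comap (sgn L)

/-- The group of totally positive elements of a number field. -/
def Ppos : Subgroup Lˣ where
  carrier := {α | ∀ τ : L →+* ℝ, 0 < τ (α : L)}
  one_mem' := by intro τ; simp
  mul_mem' := by
    intro α β hα hβ τ
    rw [Units.val_mul, map_mul]
    exact mul_pos (hα τ) (hβ τ)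
  inv_mem' := by
    intro α hα τ
    rw [Units.val_inv_eq_inv_val, map_inv₀]
    exact inv_pos.2 (hα τ)

/-- The 2-torsion subgroup `G[2]` of a commutative group `G`. -/
def twoTorsion (G : Type*) [CommGroup G] : Subgroup G where
  carrier := {x | x ^ 2 = 1}
  one_mem' := one_pow 2
  mul_mem' := by
    intro a b ha hb
    show (a * b) ^ 2 = 1
    rw [mul_pow, ha, hb, one_mul]
  inv_mem' := by
    intro a ha
    show a⁻¹ ^ 2 = 1
    rw [inv_pow, ha, inv_one]

/-- The quotient `G/G²` (written `G/2G` in additive notation) of a commutative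
group `G`. -/
def modSquares (G : Type*) [CommGroup G] : Type _ :=
  G ⧸ (powMonoidHom 2 : G →* G).range

instance (G : Type*) [CommGroup G] : CommGroup (modSquares G) :=
  inferInstanceAs (CommGroup (G ⧸ (powMonoidHom 2 : G →* G).range))

/-- The group `ℱ_L` of fractional ideals of a number field `L`. -/
abbrev FracIdealGroup (L : Type) [Field L] [NumberField L] : Type :=
  (FractionalIdeal (𝓞 L)⁰ L)ˣ

/-- For a subgroup `S ≤ L^×`, the subgroup `𝒫_L^S = {(α) : α ∈ S}` of principal
fractional ideals with a generator in `S`. -/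
def prinSub (S : Subgroup Lˣ) : Subgroup (FracIdealGroup L) :=
  S.map (toPrincipalIdeal (𝓞 L) L)

/-- The generalized ideal class group `ℱ_L/𝒫_L^S` attached to a subgroup `S ≤ L^×`;
for `S = L^×` this is the ideal class group `C_L`, for `S = P_L^+` the narrow class
group `C_L^+`, for `S = P_L^∞` the semi-narrow class group `C_L^∞`, and for
`S = P_L^0` the class group `C_L^0`. -/
def Cmod (S : Subgroup Lˣ) : Type _ := FracIdealGroup L ⧸ prinSub L S

instance (S : Subgroup Lˣ) : CommGroup (Cmod L S) :=
  inferInstanceAs (CommGroup (FracIdealGroup L ⧸ prinSub L S))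

/-- The square class group `L^×/(L^×)²`. -/
abbrev SqClasses (L : Type) [Field L] : Type := modSquares Lˣ

/-- The projection `L^× → L^×/(L^×)²`. -/
def mkSq : Lˣ →* SqClasses L :=
  QuotientGroup.mk' (powMonoidHom 2 : Lˣ →* Lˣ).range

/-- The subgroup of `L^×` of elements whose norm to `K` is a square in `K^×`. -/
def NormSq : Subgroup Lˣ :=
  Subgroup.comap (Units.map (Algebra.norm K : L →* K))
    (powMonoidHom 2 : Kˣ →* Kˣ).range

/-- An extension `S/R` is unramified at all (nonzero) finite primes: every nonzero
prime of `S` has ramification index `1` over `R`. -/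
def UnramAllFinite (R S : Type*) [CommRing R] [CommRing S] (f : R →+* S) : Prop :=
  ∀ P : Ideal S, P.IsPrime → P ≠ ⊥ →
    sSup {n : ℕ | Ideal.map f (P.comap f) ≤ P ^ n} = 1

/-- `L(√α)/L` is unramified at all finite primes:  whenever `M = L(s)` with
`s² = α`, the extension of the ring of integers of `L` inside `M` is unramified at
all nonzero primes. -/
def SqrtUnramified (α : L) : Prop :=
  ∀ (M : Type) (_ : Field M) (_ : Algebra L M) (s : M),
    s ^ 2 = algebraMap L M α → Algebra.adjoin L {s} = ⊤ →
    letI : Algebra (𝓞 L) M := ((algebraMap L M).comp (algebraMap (𝓞 L) L)).toAlgebra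
    UnramAllFinite (𝓞 L) (integralClosure (𝓞 L) M)
      (algebraMap (𝓞 L) (integralClosure (𝓞 L) M))

/-- The group `M_0` of square classes `[α] ∈ L^×/(L^×)²` such that `L(√α)/L` is
unramified at all finite primes and `α ∈ P_L^0`. -/
def M0 : Subgroup (SqClasses L) :=
  Subgroup.closure
    {x | ∃ α : Lˣ, mkSq L α = x ∧ SqrtUnramified L (α : L) ∧ α ∈ P0 L K dst}

/-- The group `M_∞` of square classes `[α] ∈ L^×/(L^×)²` such that `L(√α)/L` is
unramified at all finite primes and `α ∈ P_L^∞`. -/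
def Minf : Subgroup (SqClasses L) :=
  Subgroup.closure
    {x | ∃ α : Lˣ, mkSq L α = x ∧ SqrtUnramified L (α : L) ∧ α ∈ Pinf L K dst}

/-- The group `M_1` of square classes `[α] ∈ (L^×/(L^×)²)_{N=□}` such that `L(√α)/L`
is unramified at all finite primes and `α ∈ P_L^∞`. -/
def M1 : Subgroup (SqClasses L) :=
  Subgroup.closure
    {x | ∃ α : Lˣ, mkSq L α = x ∧ SqrtUnramified L (α : L) ∧ α ∈ Pinf L K dst ∧
      α ∈ NormSq L K}

/-- The group `M_2` of square classes `[α] ∈ (L^×/(L^×)²)_{N=□}` such that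
`(α) = I²` for some fractional ideal `I` and `α ∈ P_L^∞`. -/
def M2 : Subgroup (SqClasses L) where
  carrier :=
    {x | ∃ α : Lˣ, mkSq L α = x ∧
      (∃ I : FracIdealGroup L, toPrincipalIdeal (𝓞 L) L α = I ^ 2) ∧
      α ∈ Pinf L K dst ∧ α ∈ NormSq L K}
  one_mem' :=
    ⟨1, map_one _, ⟨1, by rw [map_one, one_pow]⟩, one_mem _, one_mem _⟩
  mul_mem' := by
    rintro x y ⟨α, rfl, ⟨I, hI⟩, hα1, hα2⟩ ⟨β, rfl, ⟨J, hJ⟩, hβ1, hβ2⟩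
    exact ⟨α * β, map_mul _ _ _, ⟨I * J, by rw [map_mul, hI, hJ, mul_pow]⟩,
      mul_mem hα1 hβ1, mul_mem hα2 hβ2⟩
  inv_mem' := by
    rintro x ⟨α, rfl, ⟨I, hI⟩, hα1, hα2⟩
    exact ⟨α⁻¹, map_inv _ _, ⟨I⁻¹, by rw [map_inv, hI, inv_pow]⟩,
      inv_mem hα1, inv_mem hα2⟩

/-- The natural projection `ℱ_L/𝒫_L^S → ℱ_L/𝒫_L^T` for `S ≤ T`. -/
def projCmod (S T : Subgroup Lˣ) (h : S ≤ T) : Cmod L S →* Cmod L T :=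
  QuotientGroup.map _ _ (MonoidHom.id _)
    (by
      intro x hx
      exact Subgroup.map_mono h hx)

/-- The map `π : C_L^∞[2] → C_L[2]` (or more generally the restriction of the
natural projection to `2`-torsion subgroups). -/
def pi2 (S T : Subgroup Lˣ) (h : S ≤ T) :
    twoTorsion (Cmod L S) →* twoTorsion (Cmod L T) :=
  MonoidHom.codRestrict ((projCmod L S T h).domRestrict (twoTorsion (Cmod L S)))
    (twoTorsion (Cmod L T))
    (by
      intro x
      show (projCmod L S T h) (x : Cmod L S) ^ 2 = 1
      rw [← map_pow]
      have hx : ((x : Cmod L S) : Cmod L S) ^ 2 = 1 := x.2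
      rw [hx, map_one])

/-- The image of the unit group `𝓞_L^×` in `L^×`. -/
def unitGroup : Subgroup Lˣ :=
  (Units.map (algebraMap (𝓞 L) L).toMonoidHom).range

/-- The image of the unit group `𝓞_K^×` in `L^×`. -/
def unitGroupBase : Subgroup Lˣ :=
  ((Units.map (algebraMap K L).toMonoidHom).comp
    (Units.map (algebraMap (𝓞 K) K).toMonoidHom)).range

/-- The map `γ : M₂ → C_L[2]` sends `[α]` with `(α) = I²` to the ideal class of
`I`.  This predicate singles out `γ` by that property (which in particular asserts
that `γ` is well defined). -/
def IsGammaMap [NumberField K] (γ : M2 L K dst →* twoTorsion (Cmod L ⊤)) : Prop :=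
  ∀ (α : Lˣ) (I : FracIdealGroup L)
    (h : toPrincipalIdeal (𝓞 L) L α = I ^ 2)
    (h1 : α ∈ Pinf L K dst) (h2 : α ∈ NormSq L K),
    (γ ⟨mkSq L α, ⟨α, rfl, ⟨I, h⟩, h1, h2⟩⟩ : Cmod L ⊤) = QuotientGroup.mk I


lemma sgnAux_of_pos {x : ℝ} (h : 0 < x) : sgnAux x = 1 := if_pos h

lemma sgnAux_sq {x : ℝ} (hx : x ≠ 0) : sgnAux (x ^ 2) = 1 :=
  sgnAux_of_pos (by positivity)

lemma sgnAux_cube (t : ℝ) : sgnAux (t ^ 3) = sgnAux t := by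
  unfold sgnAux
  by_cases h : 0 < t
  · rw [if_pos h, if_pos (by positivity)]
  · rw [if_neg h, if_neg]
    exact fun h3 => h (by nlinarith [Odd.pow_nonpos (⟨1, by norm_num⟩ : Odd 3) (not_lt.1 h)])

lemma sgnAux_prod {ι : Type*} (s : Finset ι) (f : ι → ℝ) (hf : ∀ i ∈ s, f i ≠ 0) :
    sgnAux (∏ i ∈ s, f i) = ∏ i ∈ s, sgnAux (f i) := by
  classical
  induction s using Finset.cons_induction with
  | empty => simp [sgnAux]
  | cons a s ha ih =>
    rw [Finset.prod_cons, Finset.prod_cons,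
      sgnAux_mul (hf a (Finset.mem_cons_self a s))
        (Finset.prod_ne_zero_iff.mpr fun i hi => hf i (Finset.mem_cons_of_mem hi)),
      ih fun i hi => hf i (Finset.mem_cons_of_mem hi)]

private def realify {L : Type*} [Ring L] (τ : L →+* ℂ)
    (h : ∀ y, (starRingEnd ℂ) (τ y) = τ y) : L →+* ℝ where
  toFun y := (τ y).re
  map_one' := by simp
  map_zero' := by simp
  map_mul' a b := by
    show (τ (a * b)).re = (τ a).re * (τ b).re
    rw [map_mul, Complex.mul_re, Complex.conj_eq_iff_im.mp (h b), mul_zero, sub_zero]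
  map_add' a b := by
    show (τ (a + b)).re = (τ a).re + (τ b).re
    rw [map_add, Complex.add_re]

lemma prod_sgn_extSet (K L : Type) [Field K] [NumberField K] [Field L] [NumberField L]
    [Algebra K L] [FiniteDimensional K L] (σ : K →+* ℝ) (x : L) (hx : x ≠ 0) :
    (∏ᶠ τ ∈ extSet L K σ, sgnAux (τ x)) = sgnAux (σ (Algebra.norm K x)) := by
  classical
  letI : Algebra K ℂ := (Complex.ofRealHom.comp σ).toAlgebra
  have halg : ∀ k : K, algebraMap K ℂ k = Complex.ofReal (σ k) := fun k => rfl
  have hnorm : algebraMap K ℂ (Algebra.norm K x) = ∏ τ : L →ₐ[K] ℂ, τ x :=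
    Algebra.norm_eq_prod_embeddings K (E := ℂ) x
  let c : ℂ →ₐ[K] ℂ :=
    { toRingHom := starRingEnd ℂ
      commutes' := fun k => Complex.conj_ofReal (σ k) }
  set cA : (L →ₐ[K] ℂ) → (L →ₐ[K] ℂ) := fun τ => c.comp τ with hcA
  have cA_apply : ∀ (τ : L →ₐ[K] ℂ) (y : L), cA τ y = (starRingEnd ℂ) (τ y) := fun τ y => rfl
  have cA_invol : ∀ τ, cA (cA τ) = τ := fun τ => AlgHom.ext fun y => Complex.conj_conj (τ y)
  have hτx : ∀ τ : L →ₐ[K] ℂ, τ x ≠ 0 := fun τ h =>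
    hx (τ.toRingHom.injective (by simpa using h))
  set S : Finset (L →ₐ[K] ℂ) := Finset.univ.filter (fun τ => cA τ = τ) with hSdef
  set T : Finset (L →ₐ[K] ℂ) := Finset.univ.filter (fun τ => ¬ cA τ = τ) with hTdef
  have hsplit : (∏ τ : L →ₐ[K] ℂ, τ x) = (∏ τ ∈ S, τ x) * ∏ τ ∈ T, τ x :=
    (Finset.prod_filter_mul_prod_filter_not Finset.univ _ _).symm
  have hmemT : ∀ τ ∈ T, cA τ ≠ τ := fun τ hτ => (Finset.mem_filter.mp hτ).2
  have hTmap : ∀ τ (hτ : τ ∈ T), cA τ ∈ T := by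
    intro τ hτ
    refine Finset.mem_filter.mpr ⟨Finset.mem_univ _, fun h => hmemT τ hτ ?_⟩
    rw [cA_invol] at h
    exact h.symm
  have hTone : (∏ τ ∈ T, (τ x / ((‖τ x‖ : ℝ) : ℂ))) = 1 := by
    refine Finset.prod_involution (fun τ _ => cA τ) ?_ (fun τ hτ _ => hmemT τ hτ) hTmap
      (fun τ _ => cA_invol τ)
    intro τ hτ
    rw [cA_apply, Complex.norm_conj, div_mul_div_comm, Complex.mul_conj,
      Complex.normSq_eq_norm_sq]
    push_cast
    rw [sq]
    exact div_self (mul_ne_zero (Complex.ofReal_ne_zero.mpr (norm_ne_zero_iff.mpr (hτx τ)))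
      (Complex.ofReal_ne_zero.mpr (norm_ne_zero_iff.mpr (hτx τ))))
  have hTabs : (∏ τ ∈ T, τ x) = ((∏ τ ∈ T, ‖τ x‖ : ℝ) : ℂ) := by
    rw [Finset.prod_div_distrib] at hTone
    rw [div_eq_one_iff_eq (Finset.prod_ne_zero_iff.mpr fun τ _ =>
      Complex.ofReal_ne_zero.mpr (norm_ne_zero_iff.mpr (hτx τ)))] at hTone
    rw [hTone, Complex.ofReal_prod]
  have hTpos : (0:ℝ) < ∏ τ ∈ T, ‖τ x‖ :=
    Finset.prod_pos fun τ _ => norm_pos_iff.mpr (hτx τ)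
  have hfin : (extSet L K σ).Finite := Set.toFinite _
  have hSprod : (∏ τ ∈ S, τ x) = ((∏ τ' ∈ hfin.toFinset, τ' x : ℝ) : ℂ) := by
    rw [Complex.ofReal_prod]
    refine (Finset.prod_bij (fun (τ' : L →+* ℝ) (hτ' : τ' ∈ hfin.toFinset) =>
      ({ toRingHom := Complex.ofRealHom.comp τ',
         commutes' := fun k => by
           have h0 : τ'.comp (algebraMap K L) = σ := (Set.Finite.mem_toFinset hfin).mp hτ'
           show Complex.ofReal (τ' (algebraMap K L k)) = algebraMap K ℂ k
           rw [halg, ← h0]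
           rfl } : L →ₐ[K] ℂ)) ?_ ?_ ?_ ?_).symm
    · intro τ' hτ'
      exact Finset.mem_filter.mpr ⟨Finset.mem_univ _,
        AlgHom.ext fun y => Complex.conj_ofReal (τ' y)⟩
    · intro a₁ h₁ a₂ h₂ heq
      exact RingHom.ext fun y => Complex.ofReal_inj.mp (AlgHom.ext_iff.mp heq y)
    · intro τ hτ
      have hfix : cA τ = τ := (Finset.mem_filter.mp hτ).2
      have hconj : ∀ y, (starRingEnd ℂ) (τ y) = τ y := fun y => by
        rw [← cA_apply τ y, hfix]
      refine ⟨realify (τ : L →+* ℂ) hconj, ?_, ?_⟩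
      · refine (Set.Finite.mem_toFinset hfin).mpr (RingHom.ext fun k => ?_)
        show (τ (algebraMap K L k)).re = σ k
        rw [τ.commutes k]
        exact Complex.ofReal_re (σ k)
      · exact AlgHom.ext fun y => Complex.conj_eq_iff_re.mp (hconj y)
    · intro τ' hτ'
      rfl
  have hkey : Complex.ofReal (σ (Algebra.norm K x)) =
      Complex.ofReal ((∏ τ' ∈ hfin.toFinset, τ' x) * ∏ τ ∈ T, ‖τ x‖) := by
    rw [← halg, hnorm, hsplit, hSprod, hTabs, Complex.ofReal_mul]
  have hreal := Complex.ofReal_inj.mp hkey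
  have h1 : (∏ τ' ∈ hfin.toFinset, τ' x) ≠ 0 :=
    Finset.prod_ne_zero_iff.mpr fun τ' _ => fun h =>
      hx (τ'.injective (by rw [h]; exact (map_zero _).symm))
  rw [finprod_mem_eq_finite_toFinset_prod _ hfin, hreal, sgnAux_mul h1 hTpos.ne',
    sgnAux_of_pos hTpos, mul_one,
    sgnAux_prod _ _ (fun τ' _ => fun h => hx (τ'.injective (by rw [h]; exact (map_zero _).symm)))]


lemma prod_sgn_extSet_of_normSq (K L : Type) [Field K] [NumberField K] [Field L]
    [NumberField L] [Algebra K L] [FiniteDimensional K L] (σ : K →+* ℝ) (α : Lˣ)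
    (hα : α ∈ NormSq L K) :
    (∏ᶠ τ ∈ extSet L K σ, sgnAux (τ (α : L))) = 1 := by
  obtain ⟨y, hy⟩ := hα
  have hv : Algebra.norm K ((α : Lˣ) : L) = (y : K) ^ 2 := by
    have h := congrArg (Units.val) hy
    simpa [powMonoidHom] using h.symm
  rw [prod_sgn_extSet K L σ _ (Units.ne_zero α), hv, map_pow]
  exact sgnAux_sq fun h => (Units.ne_zero y) (σ.injective (by simpa using h))

lemma prod_sgn_extSet_algebraMap (K L : Type) [Field K] [NumberField K] [Field L]
    [NumberField L] [Algebra K L] [FiniteDimensional K L]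
    (hdeg : Module.finrank K L = 3) (σ : K →+* ℝ) (k : K) (hk : k ≠ 0) :
    (∏ᶠ τ ∈ extSet L K σ, sgnAux (τ (algebraMap K L k))) = sgnAux (σ k) := by
  have h0 : algebraMap K L k ≠ 0 := fun h => hk ((algebraMap K L).injective (by simpa using h))
  rw [prod_sgn_extSet K L σ _ h0, Algebra.norm_algebraMap, hdeg, map_pow, sgnAux_cube]

lemma extSet_algebraMap_apply {K L : Type} [Field K] [Field L] [Algebra K L]
    {σ : K →+* ℝ} {τ : L →+* ℝ} (hτ : τ ∈ extSet L K σ) (k : K) :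
    τ (algebraMap K L k) = σ k := by
  have h : τ.comp (algebraMap K L) = σ := hτ
  rw [← h]
  rfl

/-- `sgn([α]) ↦ sgn(α)·sgn(𝓞_K^×)` is a well-defined isomorphism
`sgn((𝓞_L^×/(𝓞_L^×)²)_{N=□}) ≅ sgn(𝓞_L^×)/sgn(𝓞_K^×)`; moreover `sgn(𝓞_K^×) ∩ Ṽ`
is trivial and there is an induced isomorphism
`sgn((𝓞_L^×/(𝓞_L^×)²)_{N=□})·Ṽ ≅ (sgn(𝓞_L^×)·Ṽ)/sgn(𝓞_K^×)`. -/
theorem statement7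
    (K L : Type) [Field K] [NumberField K] [Field L] [NumberField L] [Algebra K L]
    (hdeg : Module.finrank K L = 3)
    (dst : (K →+* ℝ) → (L →+* ℝ))
    (hdst : ∀ σ : K →+* ℝ, (dst σ).comp (algebraMap K L) = σ) :
    (∃ e : ↥(Subgroup.map (sgn L) (unitGroup L ⊓ NormSq L K)) ≃*
        (↥(Subgroup.map (sgn L) (unitGroup L)) ⧸
          (Subgroup.map (sgn L) (unitGroupBase L K)).subgroupOf
            (Subgroup.map (sgn L) (unitGroup L))),
      ∀ (α : Lˣ) (hα : α ∈ unitGroup L ⊓ NormSq L K),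
        e ⟨sgn L α, Subgroup.mem_map_of_mem (sgn L) hα⟩ =
          QuotientGroup.mk ⟨sgn L α,
            Subgroup.mem_map_of_mem (sgn L) (Subgroup.mem_inf.mp hα).1⟩) ∧
    Subgroup.map (sgn L) (unitGroupBase L K) ⊓ Vt L K dst = ⊥ ∧
    Nonempty (↥(Subgroup.map (sgn L) (unitGroup L ⊓ NormSq L K) ⊔ Vt L K dst) ≃*
      (↥(Subgroup.map (sgn L) (unitGroup L) ⊔ Vt L K dst) ⧸
        (Subgroup.map (sgn L) (unitGroupBase L K)).subgroupOf
          (Subgroup.map (sgn L) (unitGroup L) ⊔ Vt L K dst))) := by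
  classical
  have hfd : FiniteDimensional K L := FiniteDimensional.of_finrank_pos (by rw [hdeg]; norm_num)
  have sgn_apply : ∀ (α : Lˣ) (τ : L →+* ℝ), sgn L α τ = sgnAux (τ (α : L)) := fun _ _ => rfl
  have base_val : ∀ b ∈ unitGroupBase L K, ∃ k : Kˣ, (b : L) = algebraMap K L (k : K) := by
    rintro b ⟨w, rfl⟩
    exact ⟨Units.map (algebraMap (𝓞 K) K).toMonoidHom w, rfl⟩
  have hE1 : ∀ x ∈ Subgroup.map (sgn L) (unitGroupBase L K), ∀ τ : L →+* ℝ,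
      x τ = x (dst (τ.comp (algebraMap K L))) := by
    rintro x ⟨b, hb, rfl⟩ τ
    obtain ⟨k, hk⟩ := base_val b hb
    rw [sgn_apply, sgn_apply, hk,
      extSet_algebraMap_apply (σ := τ.comp (algebraMap K L)) rfl,
      extSet_algebraMap_apply (hdst (τ.comp (algebraMap K L)))]
  have goal2 : Subgroup.map (sgn L) (unitGroupBase L K) ⊓ Vt L K dst = ⊥ := by
    rw [eq_bot_iff]
    rintro x ⟨hxB, hxV⟩
    refine Subgroup.mem_bot.mpr (funext fun τ => ?_)
    rw [hE1 x hxB τ]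
    exact (hxV (τ.comp (algebraMap K L))).1
  have hE3 : ∀ x ∈ Subgroup.map (sgn L) (unitGroup L ⊓ NormSq L K), ∀ σ : K →+* ℝ,
      (∏ᶠ τ ∈ extSet L K σ, x τ) = 1 := by
    rintro x ⟨α, hα, rfl⟩ σ
    exact prod_sgn_extSet_of_normSq K L σ α (Subgroup.mem_inf.mp hα).2
  have hE4 : ∀ x ∈ Subgroup.map (sgn L) (unitGroupBase L K), ∀ σ : K →+* ℝ,
      (∏ᶠ τ ∈ extSet L K σ, x τ) = x (dst σ) := by
    rintro x ⟨b, hb, rfl⟩ σ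
    obtain ⟨k, hk⟩ := base_val b hb
    have h1 : ∀ τ : L →+* ℝ, sgn L b τ = sgnAux (τ (algebraMap K L (k : K))) := fun τ => by
      rw [sgn_apply, hk]
    rw [finprod_mem_congr rfl (fun τ _ => h1 τ),
      prod_sgn_extSet_algebraMap K L hdeg σ (k : K) (Units.ne_zero k), h1 (dst σ),
      extSet_algebraMap_apply (hdst σ)]
  have hdecomp : ∀ x ∈ Subgroup.map (sgn L) (unitGroup L), ∃ s ∈
      Subgroup.map (sgn L) (unitGroup L ⊓ NormSq L K), ∃ b ∈
      Subgroup.map (sgn L) (unitGroupBase L K), s * b = x := by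
    rintro x ⟨α, ⟨w, rfl⟩, rfl⟩
    set u : (𝓞 K)ˣ := Units.map (RingOfIntegers.norm K) w with hu
    set uK : Kˣ := Units.map (algebraMap (𝓞 K) K).toMonoidHom u with huK
    set bU : Lˣ := Units.map (algebraMap K L).toMonoidHom uK with hbU
    have hbBase : bU ∈ unitGroupBase L K := ⟨u, rfl⟩
    have hbUnit : bU ∈ unitGroup L := by
      refine ⟨Units.map (algebraMap (𝓞 K) (𝓞 L)).toMonoidHom u, Units.ext ?_⟩
      rfl
    have hnormα : Units.map (Algebra.norm K : L →* K)
        (Units.map (algebraMap (𝓞 L) L).toMonoidHom w) = uK := Units.ext rfl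
    have hnormb : Units.map (Algebra.norm K : L →* K) bU = uK ^ 3 := by
      apply Units.ext
      show Algebra.norm K (algebraMap K L (uK : K)) = ((uK ^ 3 : Kˣ) : K)
      rw [Algebra.norm_algebraMap, hdeg, Units.val_pow_eq_pow_val]
    set β : Lˣ := Units.map (algebraMap (𝓞 L) L).toMonoidHom w * bU with hβ
    have hβUnit : β ∈ unitGroup L := mul_mem ⟨w, rfl⟩ hbUnit
    have hβNorm : β ∈ NormSq L K := by
      refine ⟨uK ^ 2, ?_⟩
      show (uK ^ 2) ^ 2 = Units.map (Algebra.norm K : L →* K) β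
      rw [hβ, map_mul, hnormα, hnormb]
      group
    refine ⟨sgn L β, ⟨β, Subgroup.mem_inf.mpr ⟨hβUnit, hβNorm⟩, rfl⟩,
      (sgn L bU)⁻¹, inv_mem ⟨bU, hbBase, rfl⟩, ?_⟩
    rw [hβ, map_mul, mul_inv_cancel_right]
  have hD : ∀ x ∈ Subgroup.map (sgn L) (unitGroup L ⊓ NormSq L K) ⊔ Vt L K dst,
      x ∈ Subgroup.map (sgn L) (unitGroupBase L K) → x = 1 := by
    intro x hx hxB
    obtain ⟨s, hs, v, hv, rfl⟩ := Subgroup.mem_sup.mp hx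
    have hone : ∀ σ : K →+* ℝ, (s * v) (dst σ) = 1 := by
      intro σ
      have hfin : (extSet L K σ).Finite := Set.toFinite _
      have hprod : (∏ᶠ τ ∈ extSet L K σ, (s * v) τ) = 1 := by
        calc (∏ᶠ τ ∈ extSet L K σ, (s * v) τ)
            = (∏ᶠ τ ∈ extSet L K σ, s τ) * ∏ᶠ τ ∈ extSet L K σ, v τ :=
              finprod_mem_mul_distrib hfin
          _ = 1 := by rw [hE3 s hs σ, (hv σ).2, one_mul]
      rw [← hE4 _ hxB σ, hprod]
    funext τ
    rw [hE1 _ hxB τ]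
    exact hone (τ.comp (algebraMap K L))
  have hST : Subgroup.map (sgn L) (unitGroup L ⊓ NormSq L K) ≤
      Subgroup.map (sgn L) (unitGroup L) := Subgroup.map_mono inf_le_left
  refine ⟨?_, goal2, ?_⟩
  · -- part 1
    let f1 : (Subgroup.map (sgn L) (unitGroup L ⊓ NormSq L K)) →*
        ((Subgroup.map (sgn L) (unitGroup L)) ⧸
          (Subgroup.map (sgn L) (unitGroupBase L K)).subgroupOf
            (Subgroup.map (sgn L) (unitGroup L))) :=
      (QuotientGroup.mk' _).comp (Subgroup.inclusion hST)
    have hf1inj : Function.Injective f1 := by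
      rw [injective_iff_map_eq_one]
      intro a ha
      have h2 := (QuotientGroup.eq_one_iff (Subgroup.inclusion hST a)).mp ha
      have h1 : (a : (L →+* ℝ) → ℤˣ) ∈ Subgroup.map (sgn L) (unitGroupBase L K) :=
        Subgroup.mem_subgroupOf.mp h2
      exact Subtype.ext (hD _ (Subgroup.mem_sup_left a.2) h1)
    have hf1surj : Function.Surjective f1 := by
      intro y
      obtain ⟨t, rfl⟩ := QuotientGroup.mk'_surjective _ y
      obtain ⟨s, hs, b, hb, hsb⟩ := hdecomp (t : (L →+* ℝ) → ℤˣ) t.2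
      refine ⟨⟨s, hs⟩, ?_⟩
      have key : (Subgroup.inclusion hST ⟨s, hs⟩)⁻¹ * t ∈
          (Subgroup.map (sgn L) (unitGroupBase L K)).subgroupOf
            (Subgroup.map (sgn L) (unitGroup L)) := by
        refine Subgroup.mem_subgroupOf.mpr ?_
        have hval : (((Subgroup.inclusion hST ⟨s, hs⟩)⁻¹ * t :
            (Subgroup.map (sgn L) (unitGroup L))) : (L →+* ℝ) → ℤˣ) = s⁻¹ * (t : _) := rfl
        rw [hval, ← hsb, inv_mul_cancel_left]
        exact hb
      exact QuotientGroup.eq.mpr key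
    refine ⟨MulEquiv.ofBijective f1 ⟨hf1inj, hf1surj⟩, fun α hα => rfl⟩
  · -- part 3
    have hSV : Subgroup.map (sgn L) (unitGroup L ⊓ NormSq L K) ⊔ Vt L K dst ≤
        Subgroup.map (sgn L) (unitGroup L) ⊔ Vt L K dst := sup_le_sup_right hST _
    let f2 : (Subgroup.map (sgn L) (unitGroup L ⊓ NormSq L K) ⊔ Vt L K dst :
        Subgroup ((L →+* ℝ) → ℤˣ)) →*
        ((Subgroup.map (sgn L) (unitGroup L) ⊔ Vt L K dst : Subgroup ((L →+* ℝ) → ℤˣ)) ⧸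
          (Subgroup.map (sgn L) (unitGroupBase L K)).subgroupOf
            (Subgroup.map (sgn L) (unitGroup L) ⊔ Vt L K dst)) :=
      (QuotientGroup.mk' _).comp (Subgroup.inclusion hSV)
    have hf2inj : Function.Injective f2 := by
      rw [injective_iff_map_eq_one]
      intro a ha
      have h2 := (QuotientGroup.eq_one_iff (Subgroup.inclusion hSV a)).mp ha
      have h1 : (a : (L →+* ℝ) → ℤˣ) ∈ Subgroup.map (sgn L) (unitGroupBase L K) :=
        Subgroup.mem_subgroupOf.mp h2
      exact Subtype.ext (hD _ a.2 h1)
    have hf2surj : Function.Surjective f2 := by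
      intro y
      obtain ⟨t, rfl⟩ := QuotientGroup.mk'_surjective _ y
      obtain ⟨p, hp, v, hv, hpv⟩ := Subgroup.mem_sup.mp t.2
      obtain ⟨s, hs, b, hb, hsb⟩ := hdecomp p hp
      have hy : s * v ∈ Subgroup.map (sgn L) (unitGroup L ⊓ NormSq L K) ⊔ Vt L K dst :=
        mul_mem (Subgroup.mem_sup_left hs) (Subgroup.mem_sup_right hv)
      refine ⟨⟨s * v, hy⟩, ?_⟩
      have key : (Subgroup.inclusion hSV ⟨s * v, hy⟩)⁻¹ * t ∈
          (Subgroup.map (sgn L) (unitGroupBase L K)).subgroupOf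
            (Subgroup.map (sgn L) (unitGroup L) ⊔ Vt L K dst) := by
        refine Subgroup.mem_subgroupOf.mpr ?_
        have hval : (((Subgroup.inclusion hSV ⟨s * v, hy⟩)⁻¹ * t : _) :
            (L →+* ℝ) → ℤˣ) = (s * v)⁻¹ * (t : _) := rfl
        have ht : (t : (L →+* ℝ) → ℤˣ) = (s * v) * b := by
          rw [← hpv, ← hsb, mul_right_comm]
        rw [hval, ht, inv_mul_cancel_left]
        exact hb
      exact QuotientGroup.eq.mpr key
    exact ⟨MulEquiv.ofBijective f2 ⟨hf2inj, hf2surj⟩⟩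

end Paper

end
end

section
/- The kernel of π : C_L^∞[2] → C_L[2] is isomorphic to 𝒫_L/𝒫_L^∞ (so that the sequence 0 → 𝒫_L/𝒫_L^∞ → C_L^∞[2] → C_L[2] is exact), and |ker(π)| = |sgn(L^×)| / |sgn(O_L^×)·Ṽ|. -/
/- Common setup: `K` is a number field and `L/K` a cubic extension (arising as
`K[x]/(F)` for a monic irreducible cubic `F` over `𝓞 K`).  For each real embedding
`σ` of `K`, `dst σ` is the distinguished real embedding of `L` above `σ`
(corresponding to the real root of `F`, resp. the smallest real root `γ₁`). -/

open NumberField Polynomial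
open scoped nonZeroDivisors

noncomputable section

namespace Paper

variable (L : Type) [Field L] [NumberField L]

variable (K : Type) [Field K] [Algebra K L]

variable (dst : (K →+* ℝ) → (L →+* ℝ))

section Surj

variable (L : Type) [Field L] [NumberField L]

lemma sgnAux_pos {x : ℝ} (hx : 0 < x) : sgnAux x = 1 := if_pos hx

lemma sgnAux_neg {x : ℝ} (hx : x < 0) : sgnAux x = -1 := if_neg (not_lt.2 hx.le)

lemma sgn_surjective : Function.Surjective (sgn L) := by
  classical
  obtain ⟨θ, hθ⟩ := Field.exists_primitive_element ℚ L
  have hint : IsIntegral ℚ θ := Algebra.IsIntegral.isIntegral θ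
  have hadj : Algebra.adjoin ℚ {θ} = ⊤ := by
    have h1 := IntermediateField.adjoin_simple_toSubalgebra_of_isAlgebraic hint.isAlgebraic
    rw [hθ, IntermediateField.top_toSubalgebra] at h1
    exact h1.symm
  have hinj : Function.Injective (fun τ : L →+* ℝ => τ θ) := by
    intro τ τ' h
    have h2 : τ.toRatAlgHom = τ'.toRatAlgHom :=
      AlgHom.ext_of_adjoin_eq_top hadj (fun x hx => by
        rcases hx with rfl
        exact h)
    exact RingHom.ext fun x => DFunLike.congr_fun h2 x
  -- for each real embedding, an element negative exactly there
  have key : ∀ τ : L →+* ℝ, ∃ α : Lˣ,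
      ∀ τ' : L →+* ℝ, sgnAux (τ' (α : L)) = if τ' = τ then -1 else 1 := by
    intro τ
    obtain ⟨d, hd0, hdsep⟩ : ∃ d > 0, ∀ τ' : L →+* ℝ, τ' ≠ τ → d ≤ |τ' θ - τ θ| := by
      by_cases hone : ∀ τ' : L →+* ℝ, τ' = τ
      · exact ⟨1, one_pos, fun τ' h => absurd (hone τ') h⟩
      · push_neg at hone
        obtain ⟨τ₀, hτ₀⟩ := hone
        obtain ⟨τm, hτm, hmin⟩ := Finset.exists_min_image
          (Finset.univ.filter (fun τ' : L →+* ℝ => τ' ≠ τ))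
          (fun τ' : L →+* ℝ => |τ' θ - τ θ|)
          ⟨τ₀, Finset.mem_filter.2 ⟨Finset.mem_univ _, hτ₀⟩⟩
        refine ⟨|τm θ - τ θ|, abs_pos.2 (sub_ne_zero.2 fun hc =>
          (Finset.mem_filter.1 hτm).2 (hinj hc)), fun τ' hne =>
          hmin τ' (Finset.mem_filter.2 ⟨Finset.mem_univ _, hne⟩)⟩
    obtain ⟨q, hq1, hq2⟩ := exists_rat_btwn (show τ θ < τ θ + d by linarith)
    obtain ⟨q', hq'1, hq'2⟩ := exists_rat_btwn (show τ θ - d < τ θ by linarith)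
    have hval : ∀ (τ' : L →+* ℝ) (r : ℚ), τ' ((r : L) - θ) = (r : ℝ) - τ' θ := by
      intro τ' r
      rw [map_sub, map_ratCast]
    set a : L := ((q : L) - θ) * ((q' : L) - θ) with ha
    have haτ : ∀ τ' : L →+* ℝ, τ' a = ((q : ℝ) - τ' θ) * ((q' : ℝ) - τ' θ) := by
      intro τ'
      rw [ha, map_mul, hval, hval]
    have hane : a ≠ 0 := by
      intro h0
      have := haτ τ
      rw [h0, map_zero] at this
      rcases mul_eq_zero.1 this.symm with h | h
      · exact absurd (sub_eq_zero.1 h).symm (ne_of_lt hq1)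
      · exact absurd (sub_eq_zero.1 h) (ne_of_lt hq'2)
    refine ⟨Units.mk0 a hane, ?_⟩
    intro τ'
    rw [Units.val_mk0, haτ τ']
    by_cases hc : τ' = τ
    · subst hc
      rw [if_pos rfl]
      exact sgnAux_neg (mul_neg_of_pos_of_neg (by linarith) (by linarith))
    · rw [if_neg hc]
      have hsep := hdsep τ' hc
      rcases le_abs.1 hsep with h | h
      · have h1 : (q : ℝ) < τ' θ := by linarith
        have h2 : (q' : ℝ) < τ' θ := by linarith
        exact sgnAux_pos (mul_pos_of_neg_of_neg (by linarith) (by linarith))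
      · have h1 : τ' θ < (q' : ℝ) := by linarith
        exact sgnAux_pos (mul_pos (by linarith) (by linarith))
  intro ε
  choose α hα using key
  refine ⟨∏ τ ∈ Finset.univ.filter (fun τ : L →+* ℝ => ε τ = -1), α τ, ?_⟩
  have hm : sgn L (∏ τ ∈ Finset.univ.filter (fun τ : L →+* ℝ => ε τ = -1), α τ)
      = ∏ τ ∈ Finset.univ.filter (fun τ : L →+* ℝ => ε τ = -1), sgn L (α τ) :=
    map_prod _ _ _
  funext τ'
  rw [hm, Finset.prod_apply]
  have : ∀ τ ∈ Finset.univ.filter (fun τ : L →+* ℝ => ε τ = -1),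
      sgn L (α τ) τ' = if τ' = τ then (-1 : ℤˣ) else 1 := fun τ _ => hα τ τ'
  rw [Finset.prod_congr rfl this, Finset.prod_ite_eq]
  rcases Int.units_eq_one_or (ε τ') with h | h <;>
    simp [Finset.mem_filter, h]

end Surj


section KerLemma

variable (L : Type) [Field L] [NumberField L]

lemma mem_unitGroup_iff (x : Lˣ) :
    toPrincipalIdeal (𝓞 L) L x = 1 ↔ x ∈ unitGroup L := by
  constructor
  · intro h
    have h1 : FractionalIdeal.spanSingleton (𝓞 L)⁰ (x : L)
        = FractionalIdeal.spanSingleton (𝓞 L)⁰ (1 : L) := by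
      have h0 := congrArg Units.val h
      rw [coe_toPrincipalIdeal, Units.val_one] at h0
      rw [h0, FractionalIdeal.spanSingleton_one]
    obtain ⟨z, hz⟩ := FractionalIdeal.spanSingleton_eq_spanSingleton.1 h1
    rw [Units.smul_def, Algebra.smul_def] at hz
    have hu : (Units.map (algebraMap (𝓞 L) L).toMonoidHom z) * x = 1 := Units.ext hz
    refine ⟨z⁻¹, ?_⟩
    rw [map_inv]
    exact inv_eq_of_mul_eq_one_right hu
  · rintro ⟨u, rfl⟩
    apply Units.ext
    rw [coe_toPrincipalIdeal, Units.val_one]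
    have hcoe : ((Units.map (algebraMap (𝓞 L) L).toMonoidHom u : Lˣ) : L)
        = algebraMap (𝓞 L) L (u : 𝓞 L) := rfl
    rw [hcoe, ← FractionalIdeal.spanSingleton_one]
    exact FractionalIdeal.spanSingleton_eq_spanSingleton.2 ⟨u⁻¹, by
      rw [Units.smul_def, Algebra.smul_def, ← map_mul, Units.inv_mul, map_one]⟩

end KerLemma

/-- `ker(π) ≅ 𝒫_L/𝒫_L^∞` (so that
`0 → 𝒫_L/𝒫_L^∞ → C_L^∞[2] → C_L[2]` is exact) and
`|ker(π)| = |sgn(L^×)|/|sgn(𝓞_L^×)·Ṽ|`. -/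
theorem statement11
    (K L : Type) [Field K] [NumberField K] [Field L] [NumberField L] [Algebra K L]
    (hdeg : Module.finrank K L = 3)
    (dst : (K →+* ℝ) → (L →+* ℝ))
    (hdst : ∀ σ : K →+* ℝ, (dst σ).comp (algebraMap K L) = σ) :
    Nonempty (↥(pi2 L (Pinf L K dst) ⊤ le_top).ker ≃*
      (↥(prinSub L (⊤ : Subgroup Lˣ)) ⧸
        (prinSub L (Pinf L K dst)).subgroupOf (prinSub L (⊤ : Subgroup Lˣ)))) ∧
    Nat.card (pi2 L (Pinf L K dst) ⊤ le_top).ker =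
      Nat.card (sgn L).range /
        Nat.card ↥(Subgroup.map (sgn L) (unitGroup L) ⊔ Vt L K dst) := by
  classical
  set f := toPrincipalIdeal (𝓞 L) L with hfdef
  -- squares lie in Pinf
  have htwo : ∀ α : Lˣ, α ^ 2 ∈ Pinf L K dst := by
    intro α
    have h1 : sgn L (α ^ 2) = 1 := by
      rw [map_pow]
      funext τ
      rw [Pi.pow_apply]
      exact Int.units_sq _
    refine Subgroup.mem_comap.2 ?_
    rw [h1]
    exact one_mem _
  have hproj : ∀ I : FracIdealGroup L,
      projCmod L (Pinf L K dst) ⊤ le_top (QuotientGroup.mk I)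
        = (QuotientGroup.mk I : Cmod L ⊤) := by
    intro I
    show QuotientGroup.map _ _ (MonoidHom.id _) _ (QuotientGroup.mk I) = _
    rfl
  have hmem1 : ∀ p : ↥(prinSub L (⊤ : Subgroup Lˣ)),
      ((QuotientGroup.mk' (prinSub L (Pinf L K dst))).comp
        (prinSub L (⊤ : Subgroup Lˣ)).subtype) p ∈ twoTorsion (Cmod L (Pinf L K dst)) := by
    rintro ⟨p, hp⟩
    obtain ⟨α, -, rfl⟩ := Subgroup.mem_map.1 hp
    show ((QuotientGroup.mk' (prinSub L (Pinf L K dst))) (f α)) ^ 2 = 1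
    refine (map_pow (QuotientGroup.mk' (prinSub L (Pinf L K dst))) (f α) 2).symm.trans ?_
    rw [← map_pow]
    exact (QuotientGroup.eq_one_iff _).2 (Subgroup.mem_map.2 ⟨α ^ 2, htwo α, rfl⟩)
  set φ₁ : ↥(prinSub L (⊤ : Subgroup Lˣ)) →* ↥(twoTorsion (Cmod L (Pinf L K dst))) :=
    MonoidHom.codRestrict _ _ hmem1 with hφ₁def
  have hmem2 : ∀ p, φ₁ p ∈ (pi2 L (Pinf L K dst) ⊤ le_top).ker := by
    rintro ⟨p, hp⟩
    rw [MonoidHom.mem_ker]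
    apply Subtype.ext
    show projCmod L (Pinf L K dst) ⊤ le_top (QuotientGroup.mk p) = 1
    rw [hproj p]
    exact (QuotientGroup.eq_one_iff _).2 hp
  set φ : ↥(prinSub L (⊤ : Subgroup Lˣ)) →* ↥(pi2 L (Pinf L K dst) ⊤ le_top).ker :=
    MonoidHom.codRestrict φ₁ _ hmem2 with hφdef
  have hφs : Function.Surjective φ := by
    rintro ⟨⟨x, hx2⟩, hxk⟩
    obtain ⟨I, rfl⟩ := QuotientGroup.mk_surjective x
    have hI : I ∈ prinSub L (⊤ : Subgroup Lˣ) := by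
      rw [MonoidHom.mem_ker] at hxk
      have h2 : projCmod L (Pinf L K dst) ⊤ le_top (QuotientGroup.mk I) = 1 :=
        congrArg Subtype.val hxk
      rw [hproj I] at h2
      exact (QuotientGroup.eq_one_iff I).1 h2
    exact ⟨⟨I, hI⟩, Subtype.ext (Subtype.ext rfl)⟩
  have hφk : φ.ker = (prinSub L (Pinf L K dst)).subgroupOf (prinSub L (⊤ : Subgroup Lˣ)) := by
    ext p
    rw [MonoidHom.mem_ker, Subgroup.mem_subgroupOf]
    constructor
    · intro h
      have h1 : (QuotientGroup.mk (p : FracIdealGroup L) : Cmod L (Pinf L K dst)) = 1 :=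
        congrArg (fun y : ↥(pi2 L (Pinf L K dst) ⊤ le_top).ker =>
          ((y : ↥(twoTorsion (Cmod L (Pinf L K dst)))) : Cmod L (Pinf L K dst))) h
      exact (QuotientGroup.eq_one_iff _).1 h1
    · intro h
      apply Subtype.ext
      apply Subtype.ext
      exact (QuotientGroup.eq_one_iff _).2 h
  have e1 : ↥(pi2 L (Pinf L K dst) ⊤ le_top).ker ≃*
      (↥(prinSub L (⊤ : Subgroup Lˣ)) ⧸
        (prinSub L (Pinf L K dst)).subgroupOf (prinSub L (⊤ : Subgroup Lˣ))) :=
    (QuotientGroup.quotientKerEquivOfSurjective φ hφs).symm.trans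
      (QuotientGroup.quotientMulEquivOfEq hφk)
  refine ⟨⟨e1⟩, ?_⟩
  -- second part: cardinality
  have hfmem : ∀ α : Lˣ, f α ∈ prinSub L (⊤ : Subgroup Lˣ) := fun α =>
    Subgroup.mem_map.2 ⟨α, Subgroup.mem_top α, rfl⟩
  set f' : Lˣ →* ↥(prinSub L (⊤ : Subgroup Lˣ)) :=
    MonoidHom.codRestrict f _ hfmem with hf'def
  have hf's : Function.Surjective f' := by
    rintro ⟨p, hp⟩
    obtain ⟨α, -, rfl⟩ := Subgroup.mem_map.1 hp
    exact ⟨α, Subtype.ext rfl⟩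
  set ψ : Lˣ →* (↥(prinSub L (⊤ : Subgroup Lˣ)) ⧸
      (prinSub L (Pinf L K dst)).subgroupOf (prinSub L (⊤ : Subgroup Lˣ))) :=
    (QuotientGroup.mk' ((prinSub L (Pinf L K dst)).subgroupOf
      (prinSub L (⊤ : Subgroup Lˣ)))).comp f' with hψdef
  have hψs : Function.Surjective ψ :=
    (QuotientGroup.mk'_surjective _).comp hf's
  have hψk : ψ.ker = Pinf L K dst ⊔ unitGroup L := by
    ext α
    rw [MonoidHom.mem_ker, MonoidHom.comp_apply, QuotientGroup.mk'_apply,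
      QuotientGroup.eq_one_iff, Subgroup.mem_subgroupOf]
    constructor
    · intro h
      obtain ⟨β, hβ, hβα⟩ := Subgroup.mem_map.1 h
      have hu : β⁻¹ * α ∈ unitGroup L := by
        rw [← mem_unitGroup_iff L, map_mul, map_inv, hβα]
        show (f' α : FracIdealGroup L)⁻¹ * f α = 1
        rw [show (f' α : FracIdealGroup L) = f α from rfl, inv_mul_cancel]
      exact Subgroup.mem_sup.2 ⟨β, hβ, β⁻¹ * α, hu, by rw [mul_inv_cancel_left]⟩
    · intro h
      obtain ⟨β, hβ, u, hu, rfl⟩ := Subgroup.mem_sup.1 h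
      have h1 : f u = 1 := (mem_unitGroup_iff L u).2 hu
      show f (β * u) ∈ _
      rw [map_mul, h1, mul_one]
      exact Subgroup.mem_map.2 ⟨β, hβ, rfl⟩
  set W : Subgroup ((L →+* ℝ) → ℤˣ) :=
    Subgroup.map (sgn L) (unitGroup L) ⊔ Vt L K dst with hWdef
  set ρ : Lˣ →* (((L →+* ℝ) → ℤˣ) ⧸ W) := (QuotientGroup.mk' W).comp (sgn L) with hρdef
  have hρs : Function.Surjective ρ :=
    (QuotientGroup.mk'_surjective W).comp (sgn_surjective L)
  have hρk : ρ.ker = Pinf L K dst ⊔ unitGroup L := by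
    ext α
    rw [MonoidHom.mem_ker, MonoidHom.comp_apply, QuotientGroup.mk'_apply,
      QuotientGroup.eq_one_iff]
    constructor
    · intro h
      obtain ⟨y, hy, z, hz, hyz⟩ := Subgroup.mem_sup.1 h
      obtain ⟨u, hu, rfl⟩ := Subgroup.mem_map.1 hy
      have hz' : u⁻¹ * α ∈ Pinf L K dst := by
        refine Subgroup.mem_comap.2 ?_
        rw [map_mul, map_inv, ← hyz, inv_mul_cancel_left]
        exact hz
      exact Subgroup.mem_sup.2 ⟨u⁻¹ * α, hz', u, hu, by rw [mul_comm, mul_inv_cancel_left]⟩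
    · intro h
      obtain ⟨β, hβ, u, hu, rfl⟩ := Subgroup.mem_sup.1 h
      rw [map_mul]
      exact mul_mem (Subgroup.mem_sup_right (Subgroup.mem_comap.1 hβ))
        (Subgroup.mem_sup_left (Subgroup.mem_map.2 ⟨u, hu, rfl⟩))
  have e2 : (Lˣ ⧸ (Pinf L K dst ⊔ unitGroup L)) ≃*
      (↥(prinSub L (⊤ : Subgroup Lˣ)) ⧸
        (prinSub L (Pinf L K dst)).subgroupOf (prinSub L (⊤ : Subgroup Lˣ))) :=
    (QuotientGroup.quotientMulEquivOfEq hψk.symm).trans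
      (QuotientGroup.quotientKerEquivOfSurjective ψ hψs)
  have e3 : (Lˣ ⧸ (Pinf L K dst ⊔ unitGroup L)) ≃* (((L →+* ℝ) → ℤˣ) ⧸ W) :=
    (QuotientGroup.quotientMulEquivOfEq hρk.symm).trans
      (QuotientGroup.quotientKerEquivOfSurjective ρ hρs)
  have hcard1 : Nat.card (pi2 L (Pinf L K dst) ⊤ le_top).ker
      = Nat.card (((L →+* ℝ) → ℤˣ) ⧸ W) :=
    Nat.card_congr ((e1.trans (e2.symm.trans e3)).toEquiv)
  have hrange : (sgn L).range = ⊤ := MonoidHom.range_eq_top.2 (sgn_surjective L)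
  have hcard2 : Nat.card (sgn L).range = Nat.card ((L →+* ℝ) → ℤˣ) := by
    rw [hrange]
    exact Nat.card_congr Subgroup.topEquiv.toEquiv
  have hlag : Nat.card ((L →+* ℝ) → ℤˣ)
      = Nat.card (((L →+* ℝ) → ℤˣ) ⧸ W) * Nat.card W :=
    Subgroup.card_eq_card_quotient_mul_card_subgroup W
  have hWpos : 0 < Nat.card W := Nat.card_pos
  rw [hcard1, hcard2]
  exact (Nat.div_eq_of_eq_mul_left hWpos hlag).symm

end Paper

end
end

section
/- The image of O_K^× under the sign map O_K^× → ∏_{v real place of K}{±1} has cardinality 2^{r₁} · |C_K| / |C_K^+|, where r₁ is the number of real places of K. -/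
/- Common setup: `K` is a number field and `L/K` a cubic extension (arising as
`K[x]/(F)` for a monic irreducible cubic `F` over `𝓞 K`).  For each real embedding
`σ` of `K`, `dst σ` is the distinguished real embedding of `L` above `σ`
(corresponding to the real root of `F`, resp. the smallest real root `γ₁`). -/

open NumberField Polynomial
open scoped nonZeroDivisors

noncomputable section

namespace Paper

variable (L : Type) [Field L] [NumberField L]

variable (K : Type) [Field K] [Algebra K L]

variable (dst : (K →+* ℝ) → (L →+* ℝ))

lemma sgnAux_eq_one_iff {x : ℝ} : sgnAux x = 1 ↔ 0 < x := by
  unfold sgnAux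
  by_cases h : 0 < x
  · rw [if_pos h]
    exact ⟨fun _ => h, fun _ => rfl⟩
  · rw [if_neg h]
    exact ⟨fun hc => absurd hc (by decide), fun hc => absurd hc h⟩

lemma ker_sgn (F : Type) [Field F] [NumberField F] : (sgn F).ker = Ppos F := by
  ext α
  constructor
  · intro h
    have h1 : sgn F α = 1 := MonoidHom.mem_ker.mp h
    show ∀ τ : F →+* ℝ, 0 < τ (α : F)
    intro τ
    exact sgnAux_eq_one_iff.mp (congrFun h1 τ)
  · intro h
    have h' : ∀ τ : F →+* ℝ, 0 < τ (α : F) := h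
    refine MonoidHom.mem_ker.mpr ?_
    funext τ
    exact sgnAux_eq_one_iff.mpr (h' τ)

lemma sgn_surjective_s12 (F : Type) [Field F] [NumberField F] :
    Function.Surjective (sgn F) := by
  classical
  intro ε
  cases isEmpty_or_nonempty (F →+* ℝ) with
  | inl h => exact ⟨1, funext fun τ => (h.false τ).elim⟩
  | inr hne =>
  obtain ⟨θ, hθ⟩ := Field.exists_primitive_element ℚ F
  set t : (F →+* ℝ) → ℝ := fun τ => τ θ with ht
  have tinj : Function.Injective t := by
    intro f g hfg
    have hint : IsIntegral ℚ θ := IsIntegral.of_finite ℚ θ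
    have hadj : Algebra.adjoin ℚ {θ} = ⊤ := by
      have h2 := IntermediateField.adjoin_simple_toSubalgebra_of_isAlgebraic (F := ℚ) (α := θ) hint.isAlgebraic
      rw [hθ, IntermediateField.top_toSubalgebra] at h2
      exact h2.symm
    apply (RingHom.equivRatAlgHom F ℝ).injective
    apply AlgHom.ext_of_adjoin_eq_top hadj
    intro x hx
    rw [Set.mem_singleton_iff] at hx
    subst hx
    exact hfg
  let q : Polynomial ℝ := Lagrange.interpolate Finset.univ t fun τ => ((ε τ : ℤ) : ℝ)
  have hq : ∀ τ, q.eval (t τ) = ((ε τ : ℤ) : ℝ) := fun τ =>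
    Lagrange.eval_interpolate_at_node _ tinj.injOn (Finset.mem_univ τ)
  set d : ℕ := q.natDegree with hd
  set C : ℝ := 1 + ∑ τ : F →+* ℝ, ∑ j ∈ Finset.range (d + 1), |t τ| ^ j with hC
  have hsum_nonneg : (0:ℝ) ≤ ∑ τ : F →+* ℝ, ∑ j ∈ Finset.range (d + 1), |t τ| ^ j :=
    Finset.sum_nonneg fun τ _ => Finset.sum_nonneg fun j _ => pow_nonneg (abs_nonneg _) j
  have hC0 : (0:ℝ) < C := by rw [hC]; linarith
  have hCb : ∀ (τ : F →+* ℝ), ∀ j ∈ Finset.range (d + 1), |t τ| ^ j ≤ C := by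
    intro τ j hj
    have h1 : |t τ| ^ j ≤ ∑ j' ∈ Finset.range (d + 1), |t τ| ^ j' :=
      Finset.single_le_sum (fun i _ => pow_nonneg (abs_nonneg _) i) hj
    have h2 : (∑ j' ∈ Finset.range (d + 1), |t τ| ^ j')
        ≤ ∑ τ' : F →+* ℝ, ∑ j' ∈ Finset.range (d + 1), |t τ'| ^ j' :=
      Finset.single_le_sum (f := fun τ' => ∑ j' ∈ Finset.range (d + 1), |t τ'| ^ j')
        (fun τ' _ => Finset.sum_nonneg fun i _ => pow_nonneg (abs_nonneg _) i)
        (Finset.mem_univ τ)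
    rw [hC]; linarith
  set δ : ℝ := 1 / (2 * ((d : ℝ) + 1) * C) with hδdef
  have hδ : 0 < δ := by
    rw [hδdef]
    positivity
  choose r hr using fun j : ℕ => exists_rat_near (K := ℝ) (q.coeff j) hδ
  set x : F := ∑ j ∈ Finset.range (d + 1), (r j : F) * θ ^ j with hx
  have hτx : ∀ τ : F →+* ℝ, τ x = ∑ j ∈ Finset.range (d + 1), (r j : ℝ) * (t τ) ^ j := by
    intro τ
    rw [hx, map_sum]
    refine Finset.sum_congr rfl fun j _ => ?_
    rw [map_mul, map_pow, map_ratCast]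
  have key : ∀ τ : F →+* ℝ, |τ x - ((ε τ : ℤ) : ℝ)| < 1 := by
    intro τ
    have heval : ((ε τ : ℤ) : ℝ) = ∑ j ∈ Finset.range (d + 1), q.coeff j * (t τ) ^ j := by
      rw [← hq τ, Polynomial.eval_eq_sum_range]
    rw [hτx τ, heval, ← Finset.sum_sub_distrib]
    have hbound : ∀ j ∈ Finset.range (d + 1),
        |((r j : ℝ) * t τ ^ j - q.coeff j * t τ ^ j)| ≤ δ * C := by
      intro j hj
      rw [← sub_mul, abs_mul, abs_pow]
      have h1 : |(r j : ℝ) - q.coeff j| ≤ δ := by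
        rw [abs_sub_comm]; exact (hr j).le
      exact mul_le_mul h1 (hCb τ j hj) (pow_nonneg (abs_nonneg _) j) hδ.le
    calc |∑ j ∈ Finset.range (d + 1), ((r j : ℝ) * t τ ^ j - q.coeff j * t τ ^ j)|
        ≤ ∑ j ∈ Finset.range (d + 1), |((r j : ℝ) * t τ ^ j - q.coeff j * t τ ^ j)| :=
          Finset.abs_sum_le_sum_abs _ _
      _ ≤ ∑ _j ∈ Finset.range (d + 1), δ * C := Finset.sum_le_sum hbound
      _ = ((d : ℝ) + 1) * (δ * C) := by
          rw [Finset.sum_const, Finset.card_range, nsmul_eq_mul]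
          push_cast
          ring
      _ < 1 := by
          rw [hδdef]
          have hCne : C ≠ 0 := hC0.ne'
          have hd1 : ((d:ℝ) + 1) ≠ 0 := by positivity
          have heq : ((d:ℝ) + 1) * (1 / (2 * ((d : ℝ) + 1) * C) * C) = 1 / 2 := by
            field_simp
          rw [heq]
          norm_num
  have hx0 : x ≠ 0 := by
    obtain ⟨τ⟩ := hne
    intro h0
    have hk := key τ
    rw [h0, map_zero, zero_sub, abs_neg] at hk
    rcases Int.units_eq_one_or (ε τ) with h | h <;> rw [h] at hk <;> norm_num at hk
  refine ⟨Units.mk0 x hx0, ?_⟩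
  funext τ
  show sgnAux (τ x) = ε τ
  have hk := key τ
  rcases Int.units_eq_one_or (ε τ) with h | h <;> rw [h] at hk ⊢ <;>
    rw [abs_sub_lt_iff] at hk <;> push_cast at hk
  · exact sgnAux_eq_one_iff.mpr (by linarith [hk.1, hk.2])
  · have hneg : ¬ (0 < τ x) := by push_neg; linarith [hk.1, hk.2]
    unfold sgnAux
    rw [if_neg hneg]

lemma ker_toPrincipal (F : Type) [Field F] [NumberField F] :
    (toPrincipalIdeal (𝓞 F) F).ker = unitGroup F := by
  ext x
  rw [MonoidHom.mem_ker]
  constructor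
  · intro h
    have h1 : FractionalIdeal.spanSingleton (𝓞 F)⁰ (x : F) = 1 := by
      have h2 := (toPrincipalIdeal_eq_iff (R := 𝓞 F) (K := F) (I := 1) (x := x)).mp h
      rwa [Units.val_one] at h2
    obtain ⟨a, ha⟩ := (FractionalIdeal.mem_one_iff _).mp
      (h1 ▸ FractionalIdeal.mem_spanSingleton_self _ (x : F))
    have h2 : FractionalIdeal.spanSingleton (𝓞 F)⁰ ((x : F)⁻¹) = 1 := by
      rw [← FractionalIdeal.spanSingleton_inv, h1, inv_one]
    obtain ⟨b, hb⟩ := (FractionalIdeal.mem_one_iff _).mp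
      (h2 ▸ FractionalIdeal.mem_spanSingleton_self _ ((x : F)⁻¹))
    have hinj := IsFractionRing.injective (𝓞 F) F
    have hab : a * b = 1 := by
      apply hinj
      rw [map_mul, ha, hb, map_one, mul_inv_cancel₀ (Units.ne_zero x)]
    have hba : b * a = 1 := by rw [mul_comm]; exact hab
    refine MonoidHom.mem_range.mpr ⟨⟨a, b, hab, hba⟩, Units.ext ?_⟩
    simpa using ha
  · rintro ⟨u, rfl⟩
    rw [toPrincipalIdeal_eq_iff, Units.val_one]
    have hcoe : ((Units.map (algebraMap (𝓞 F) F).toMonoidHom u : Fˣ) : F)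
        = algebraMap (𝓞 F) F (u : 𝓞 F) := rfl
    rw [hcoe, ← FractionalIdeal.coeIdeal_span_singleton,
      Ideal.span_singleton_eq_top.mpr u.isUnit, FractionalIdeal.coeIdeal_top]

/-- The image of `𝓞_K^×` under the sign map has cardinality
`2^{r₁}·|C_K|/|C_K⁺|`, where `r₁` is the number of real places (equivalently, of
real embeddings) of `K`. -/
theorem statement12 (K : Type) [Field K] [NumberField K] :
    Nat.card (Subgroup.map (sgn K) (unitGroup K)) =
      2 ^ Nat.card (K →+* ℝ) * Nat.card (Cmod K (⊤ : Subgroup Kˣ)) /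
        Nat.card (Cmod K (Ppos K)) := by
  classical
  set G := FracIdealGroup K with hG
  set P : Subgroup G := prinSub K ⊤ with hP
  set Q : Subgroup G := prinSub K (Ppos K) with hQ
  set U : Subgroup Kˣ := unitGroup K with hU
  set S : Subgroup ((K →+* ℝ) → ℤˣ) := Subgroup.map (sgn K) U with hS
  set W : Subgroup Kˣ := Ppos K ⊔ U with hW
  -- first isomorphism: Kˣ ⧸ W ≃ T ⧸ S
  have hkW1 : ((QuotientGroup.mk' S).comp (sgn K)).ker = W := by
    rw [← MonoidHom.comap_ker, QuotientGroup.ker_mk', hS, Subgroup.comap_map_eq, ker_sgn, hW]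
    exact sup_comm U (Ppos K)
  have hsurj1 : Function.Surjective ((QuotientGroup.mk' S).comp (sgn K)) :=
    (QuotientGroup.mk'_surjective S).comp (sgn_surjective_s12 K)
  have eq1 : (Kˣ ⧸ W) ≃ ((((K →+* ℝ) → ℤˣ)) ⧸ S) :=
    ((QuotientGroup.quotientMulEquivOfEq hkW1).symm.trans
      (QuotientGroup.quotientKerEquivOfSurjective _ hsurj1)).toEquiv
  have e1 : Nat.card ((((K →+* ℝ) → ℤˣ)) ⧸ S) = Nat.card (Kˣ ⧸ W) :=
    (Nat.card_congr eq1).symm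
  -- second isomorphism: Kˣ ⧸ W ≃ P / Q
  have hkW2 : ((QuotientGroup.mk' Q).comp (toPrincipalIdeal (𝓞 K) K)).ker = W := by
    rw [← MonoidHom.comap_ker, QuotientGroup.ker_mk', hQ]
    show Subgroup.comap _ (Subgroup.map _ (Ppos K)) = W
    rw [Subgroup.comap_map_eq, ker_toPrincipal, hW, hU]
  have hrange2 : ((QuotientGroup.mk' Q).comp (toPrincipalIdeal (𝓞 K) K)).range
      = P.map (QuotientGroup.mk' Q) := by
    rw [MonoidHom.range_comp, MonoidHom.range_eq_map, hP]
    rfl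
  have eq2 : (Kˣ ⧸ W) ≃ (P.map (QuotientGroup.mk' Q)) :=
    ((QuotientGroup.quotientMulEquivOfEq hkW2).symm.trans
      ((QuotientGroup.quotientKerEquivRange
        ((QuotientGroup.mk' Q).comp (toPrincipalIdeal (𝓞 K) K))).trans
        (MulEquiv.subgroupCongr hrange2))).toEquiv
  have e2 : Nat.card (P.map (QuotientGroup.mk' Q)) = Nat.card (Kˣ ⧸ W) :=
    (Nat.card_congr eq2).symm
  -- third isomorphism
  have hQP : Q ≤ P := Subgroup.map_mono le_top
  have e3 : Nat.card ((G ⧸ Q) ⧸ P.map (QuotientGroup.mk' Q))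
      = Nat.card (Cmod K (⊤ : Subgroup Kˣ)) :=
    Nat.card_congr (QuotientGroup.quotientQuotientEquivQuotient Q P hQP).toEquiv
  -- Lagrange on G ⧸ Q
  have lag2 : Nat.card (Cmod K (Ppos K)) =
      Nat.card (Cmod K (⊤ : Subgroup Kˣ)) * Nat.card (Kˣ ⧸ W) := by
    have h := Subgroup.card_eq_card_quotient_mul_card_subgroup
      (P.map (QuotientGroup.mk' Q))
    rw [e3, e2] at h
    exact h
  -- Lagrange on T
  have lag1 : Nat.card ((K →+* ℝ) → ℤˣ) = Nat.card (Kˣ ⧸ W) * Nat.card S := by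
    have h := Subgroup.card_eq_card_quotient_mul_card_subgroup S
    rw [e1] at h
    exact h
  have cardT : Nat.card ((K →+* ℝ) → ℤˣ) = 2 ^ Nat.card (K →+* ℝ) := by
    rw [Nat.card_fun, Nat.card_eq_fintype_card (α := ℤˣ), Fintype.card_units_int]
  -- positivity of the two factors
  have hPr : P = (toPrincipalIdeal (𝓞 K) K).range := by
    rw [hP, MonoidHom.range_eq_map]
    rfl
  have hfinP : Finite (G ⧸ P) := by
    have hfin0 : Finite (G ⧸ (toPrincipalIdeal (𝓞 K) K).range) :=
      Finite.of_equiv _ (ClassGroup.equiv K).toEquiv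
    exact Finite.of_equiv _ (QuotientGroup.quotientMulEquivOfEq hPr).symm.toEquiv
  have ha : 0 < Nat.card (Cmod K (⊤ : Subgroup Kˣ)) := by
    have : Nat.card (Cmod K (⊤ : Subgroup Kˣ)) = Nat.card (G ⧸ P) := rfl
    rw [this]
    exact Nat.card_pos
  have hfinT : Finite ((K →+* ℝ) → ℤˣ) := inferInstance
  have hfinW : Finite (Kˣ ⧸ W) := Finite.of_equiv _ eq1.symm
  have hk : 0 < Nat.card (Kˣ ⧸ W) := Nat.card_pos
  -- conclude
  rw [← cardT, lag1, lag2]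
  rw [show Nat.card (Kˣ ⧸ W) * Nat.card S * Nat.card (Cmod K (⊤ : Subgroup Kˣ))
      = Nat.card S * (Nat.card (Cmod K (⊤ : Subgroup Kˣ)) * Nat.card (Kˣ ⧸ W)) by ring]
  rw [Nat.mul_div_cancel _ (Nat.mul_pos ha hk)]

end Paper

end
end
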